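/- Let A, B be Wajsberg hoops and p : A → B, s : B → A homomorphisms with p ∘ s = id_B and with s a strong section, and let X = {a ∈ A | p(a) = 1}. Then for all b₁, b₂ ∈ B and x, y ∈ X: (s(b₂ → b₁) → (x → y)) → y = (s(b₁ → b₂) → (y → x)) → x; that is, the induced strong external action g_b(x) = s(b) → x satisfies condition (W2). -/

import Mathlib

class Hoop (α : Type*) extends CommMonoid α, HImp α where
  himp_self : ∀ x : α, x ⇨ x = 1
  mul_himp_comm : ∀ x y : α, x * (x ⇨ y) = y * (y ⇨ x)
  mul_himp_assoc : ∀ x y z : α, (x * y) ⇨ z = x ⇨ (y ⇨ z)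

/-- A Wajsberg hoop: a hoop satisfying `(x → y) → y = (y → x) → x`. -/
class WajsbergHoop (α : Type*) extends Hoop α where
  waj : ∀ x y : α, (x ⇨ y) ⇨ y = (y ⇨ x) ⇨ x

/-!
For `z` in the kernel, strongness gives `z → s b = s 1 → s b = s b`, and in a Wajsberg hoop
`z → a = a` forces `a → z = z`. Hence every `s b → -` fixes the kernel pointwise; as the kernel
is closed under `→`, (W2) collapses to the Wajsberg identity `(x → y) → y = (y → x) → x`.
-/

namespace Hoop

variable {α : Type*} [Hoop α]

theorem himp_left_comm (a b c : α) : a ⇨ (b ⇨ c) = b ⇨ (a ⇨ c) := by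
  rw [← Hoop.mul_himp_assoc, mul_comm, Hoop.mul_himp_assoc]

theorem himp_himp_one (a b : α) : (a ⇨ b) ⇨ 1 = 1 := by
  calc (a ⇨ b) ⇨ 1 = (a * (a ⇨ b)) ⇨ a := by
        rw [mul_comm, Hoop.mul_himp_assoc, Hoop.himp_self]
    _ = (b ⇨ a) ⇨ (b ⇨ a) := by rw [Hoop.mul_himp_comm, mul_comm, Hoop.mul_himp_assoc]
    _ = 1 := Hoop.himp_self _

theorem eq_of_himp_eq_one {a b : α} (hab : a ⇨ b = 1) (hba : b ⇨ a = 1) : a = b :=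
  calc a = a * (a ⇨ b) := by rw [hab, mul_one]
    _ = b * (b ⇨ a) := Hoop.mul_himp_comm a b
    _ = b := by rw [hba, mul_one]

theorem one_himp (x : α) : 1 ⇨ x = x := by
  have hleft : (1 ⇨ x) ⇨ x = 1 := by
    have h := Hoop.mul_himp_comm 1 x
    rw [one_mul] at h
    rw [h, mul_comm, Hoop.mul_himp_assoc, Hoop.himp_self, himp_himp_one]
  have hright : x ⇨ (1 ⇨ x) = 1 := by
    rw [← Hoop.mul_himp_assoc, mul_one, Hoop.himp_self]
  exact eq_of_himp_eq_one hleft hright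

theorem himp_one (x : α) : x ⇨ 1 = 1 := by
  simpa only [one_himp] using himp_himp_one 1 x

theorem himp_himp_self (a b : α) : b ⇨ (a ⇨ b) = 1 := by
  rw [himp_left_comm, Hoop.himp_self, himp_one]

end Hoop

namespace WajsbergHoop

variable {α : Type*} [WajsbergHoop α]

theorem himp_eq_self_of_himp_eq_self {a z : α} (h : z ⇨ a = a) : a ⇨ z = z :=
  Hoop.eq_of_himp_eq_one (by rw [WajsbergHoop.waj, h, Hoop.himp_self]) (Hoop.himp_himp_self a z)

end WajsbergHoop

theorem strong_section_himp_eq_self_of_mem_kernel {A B : Type*} [WajsbergHoop A] [One B]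
    (p : A → B) (s : B → A) (hs1 : s 1 = 1) (hss : ∀ (a : A) (b : B), a ⇨ s b = s (p a) ⇨ s b)
    {z : A} (hz : p z = 1) (b : B) : s b ⇨ z = z :=
  WajsbergHoop.himp_eq_self_of_himp_eq_self (by rw [hss, hz, hs1, Hoop.one_himp])

theorem stmt13_general {A B : Type*} [WajsbergHoop A] [WajsbergHoop B] (p : A → B) (s : B → A)
    (hpi : ∀ a a' : A, p (a ⇨ a') = p a ⇨ p a')
    (hs1 : s 1 = 1)
    (hss : ∀ (a : A) (b : B), a ⇨ s b = s (p a) ⇨ s b) :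
    ∀ (b₁ b₂ : B) (x y : A), p x = 1 → p y = 1 →
      (s (b₂ ⇨ b₁) ⇨ (x ⇨ y)) ⇨ y = (s (b₁ ⇨ b₂) ⇨ (y ⇨ x)) ⇨ x := by
  intro b₁ b₂ x y hx hy
  have hxy : p (x ⇨ y) = 1 := by rw [hpi, hx, hy, Hoop.himp_self]
  have hyx : p (y ⇨ x) = 1 := by rw [hpi, hx, hy, Hoop.himp_self]
  rw [strong_section_himp_eq_self_of_mem_kernel p s hs1 hss hxy,
    strong_section_himp_eq_self_of_mem_kernel p s hs1 hss hyx]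
  exact WajsbergHoop.waj x y

/-- For a split epimorphism of Wajsberg hoops `p : A → B` with strong section `s` and
kernel `X = {a | p a = 1}`, the induced action `g_b(x) = s b → x` satisfies (W2):
`(s(b₂ → b₁) → (x → y)) → y = (s(b₁ → b₂) → (y → x)) → x` for `x, y ∈ X`. -/
theorem stmt13 {A B : Type*} [WajsbergHoop A] [WajsbergHoop B] (p : A → B) (s : B → A)
    (hp1 : p 1 = 1) (hpm : ∀ a a' : A, p (a * a') = p a * p a')
    (hpi : ∀ a a' : A, p (a ⇨ a') = p a ⇨ p a')
    (hs1 : s 1 = 1) (hsm : ∀ b b' : B, s (b * b') = s b * s b')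
    (hsi : ∀ b b' : B, s (b ⇨ b') = s b ⇨ s b')
    (hps : ∀ b : B, p (s b) = b)
    (hss : ∀ (a : A) (b : B), a ⇨ s b = s (p a) ⇨ s b) :
    ∀ (b₁ b₂ : B) (x y : A), p x = 1 → p y = 1 →
      (s (b₂ ⇨ b₁) ⇨ (x ⇨ y)) ⇨ y = (s (b₁ ⇨ b₂) ⇨ (y ⇨ x)) ⇨ x :=
  stmt13_general p s hpi hs1 hss
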